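/- Let ρ : ℝ^d → ℂ^{2^d × 2^d} be the tensor product ρ(x) = ρ¹(x_1) ⊗ ⋯ ⊗ ρ¹(x_d), where ρ¹(t) = (1/2)·[[1 + cos t, i sin t], [−i sin t, 1 − cos t]]. Then for each k, the partial derivative satisfies ∂_k ρ(x) = (ρ(x + (π/2)e_k) − ρ(x − (π/2)e_k)) / 2, where e_k is the k-th standard basis vector. -/

import Mathlib

/-!
Each entry of `ρ¹(t)` has the form `a + b cos t + c sin t` (the Bloch form
`ρ¹(t) = (1 + cos t · Z - sin t · Y) / 2`), and for such a function the shifts by `±π/2` turn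
`cos` into `∓ sin` and `sin` into `± cos`, so `f (s + π/2) - f (s - π/2) = 2 f'(s)`.
Since `x_k` enters `ρ(x)` through the `k`-th factor only, every entry of `ρ` is, as a function
of `x_k`, of the same form.
-/

open Real Complex Matrix

/-- The single-qubit encoded state `ρ¹(t) = R_X(t)|0⟩⟨0|R_X(t)†`. -/
noncomputable def rho1 (t : ℝ) : Matrix (Fin 2) (Fin 2) ℂ :=
  (1 / 2 : ℂ) • !![(1 + Real.cos t : ℂ), Complex.I * Real.sin t;
                   -Complex.I * Real.sin t, 1 - Real.cos t]

/-- The `d`-fold Kronecker product `ρ(x) = ρ¹(x_1) ⊗ ⋯ ⊗ ρ¹(x_d)`, with the tensor-factor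
index set `Fin d → Fin 2` for bit-strings. -/
noncomputable def rhoAll {d : ℕ} (x : Fin d → ℝ) :
    Matrix (Fin d → Fin 2) (Fin d → Fin 2) ℂ :=
  Matrix.of fun k l => ∏ j : Fin d, rho1 (x j) (k j) (l j)

theorem hasDerivAt_parameterShift_of_eq_cos_sin {E : Type*} [NormedAddCommGroup E]
    [NormedSpace ℝ E] {f : ℝ → E} {a b c : E} (hf : ∀ t, f t = a + Real.cos t • b + Real.sin t • c)
    (s : ℝ) : HasDerivAt f ((2 : ℝ)⁻¹ • (f (s + π / 2) - f (s - π / 2))) s := by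
  have hderiv : HasDerivAt f (-Real.sin s • b + Real.cos s • c) s := by
    rw [funext hf]
    simpa using (((Real.hasDerivAt_cos s).smul_const b).const_add a).fun_add
      ((Real.hasDerivAt_sin s).smul_const c)
  convert hderiv using 1
  simp only [hf, Real.cos_add_pi_div_two, Real.sin_add_pi_div_two, Real.cos_sub_pi_div_two,
    Real.sin_sub_pi_div_two, neg_smul]
  module

theorem rho1_eq_bloch (t : ℝ) :
    rho1 t = (2⁻¹ : ℂ) • 1 + Real.cos t • (2⁻¹ : ℂ) • !![1, 0; 0, -1]
      + Real.sin t • (2⁻¹ : ℂ) • !![0, I; -I, 0] := by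
  rw [rho1, one_fin_two]
  ext i j
  fin_cases i <;> fin_cases j <;>
    simp only [Matrix.add_apply, Matrix.smul_apply, of_apply, cons_val', cons_val_zero, cons_val_one,
      cons_val_fin_one, Fin.zero_eta, Fin.mk_one, smul_eq_mul, real_smul] <;>
    ring

theorem rho1_apply_eq_cos_sin (i j : Fin 2) :
    ∃ a b c : ℂ, ∀ t, rho1 t i j = a + Real.cos t • b + Real.sin t • c :=
  ⟨_, _, _, fun t => by rw [rho1_eq_bloch]; rfl⟩

theorem rhoAll_update_apply {d : ℕ} (x : Fin d → ℝ) (k : Fin d) (t : ℝ) (a b : Fin d → Fin 2) :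
    rhoAll (Function.update x k t) a b =
      rho1 t (a k) (b k) * ∏ j ∈ Finset.univ.erase k, rho1 (x j) (a j) (b j) := by
  rw [rhoAll, of_apply, ← Finset.mul_prod_erase _ _ (Finset.mem_univ k), Function.update_self]
  congr 1
  refine Finset.prod_congr rfl fun j hj => ?_
  rw [Function.update_of_ne (Finset.ne_of_mem_erase hj)]

theorem rhoAll_update_apply_eq_cos_sin {d : ℕ} (x : Fin d → ℝ) (k : Fin d) (a b : Fin d → Fin 2) :
    ∃ α β γ : ℂ, ∀ t, rhoAll (Function.update x k t) a b = α + Real.cos t • β + Real.sin t • γ := by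
  obtain ⟨α, β, γ, h⟩ := rho1_apply_eq_cos_sin (a k) (b k)
  set C := ∏ j ∈ Finset.univ.erase k, rho1 (x j) (a j) (b j)
  refine ⟨α * C, β * C, γ * C, fun t => ?_⟩
  rw [rhoAll_update_apply, h, add_mul, add_mul, smul_mul_assoc, smul_mul_assoc]

theorem Function.update_add_eq_add_smul_single {ι R : Type*} [DecidableEq ι] [Semiring R]
    (x : ι → R) (k : ι) (c : R) : Function.update x k (x k + c) = x + c • Pi.single k 1 := by
  ext j
  rcases eq_or_ne j k with rfl | hj <;> simp [*]

/-- the parameter-shift rule for the product state, entrywise: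
`∂_k ρ(x) = (ρ(x + (π/2)e_k) − ρ(x − (π/2)e_k)) / 2`. -/
theorem rhoAll_parameter_shift {d : ℕ} (x : Fin d → ℝ) (k : Fin d)
    (a b : Fin d → Fin 2) :
    deriv (fun t => rhoAll (Function.update x k t) a b) (x k)
      = ((rhoAll (x + (π / 2) • (Pi.single k 1 : Fin d → ℝ))
          - rhoAll (x - (π / 2) • (Pi.single k 1 : Fin d → ℝ))) a b) / 2 := by
  obtain ⟨α, β, γ, h⟩ := rhoAll_update_apply_eq_cos_sin x k a b
  rw [(hasDerivAt_parameterShift_of_eq_cos_sin h (x k)).deriv, sub_eq_add_neg (x k),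
    Function.update_add_eq_add_smul_single, Function.update_add_eq_add_smul_single,
    neg_smul, ← sub_eq_add_neg, Matrix.sub_apply, Complex.real_smul, ofReal_inv, ofReal_ofNat,
    inv_mul_eq_div]
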